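/- Let G act sharply 2-transitively on Ω with |Ω| ≥ 2, suppose some point stabilizer contains an involution, and suppose there exist two distinct involutions σ, τ whose product στ has finite order n. Then n is prime. -/

import Mathlib

/-!
A sharply 2-transitive group whose involutions have fixed points behaves like the affine group
`z ↦ a z + b` of a near-field of characteristic `≠ 2`: all involutions are conjugate, each fixes
exactly one point, and each point is fixed by exactly one involution (the intrinsic `z ↦ -z`).
Sending the fixed points of `a, b` to those of `a', b'` therefore conjugates `a * b` to `a' * b'`,
so all nontrivial products of two involutions are conjugate and share one order `n`. If
`α = σ * τ` has order `n` and `m ∣ n` with `1 < m < n`, then `α ^ m = σ * (σ * α ^ m)` is again such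
a product, yet it has order `n / m ≠ n`.
-/

def IsSharply2Transitive (G Ω : Type*) [Group G] [MulAction G Ω] : Prop :=
  ∀ x y z w : Ω, x ≠ y → z ≠ w → ∃! g : G, g • x = z ∧ g • y = w

section Group

variable {G : Type*} [Group G]

lemma IsConj.orderOf_eq {a b : G} (hab : IsConj a b) : orderOf a = orderOf b := by
  obtain ⟨c, hc⟩ := hab
  exact hc.orderOf_eq

lemma eq_one_of_orderOf_pow_eq {g : G} {m : ℕ} (hm : m ∣ orderOf g) (hg : orderOf g ≠ 0)
    (hgm : orderOf (g ^ m) = orderOf g) : m = 1 := by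
  have hm0 : m ≠ 0 := by rintro rfl; exact hg (zero_dvd_iff.mp hm)
  rw [orderOf_pow_of_dvd hm0 hm, Nat.div_eq_self] at hgm
  exact hgm.resolve_left hg

lemma smul_smul_of_orderOf_eq_two {Ω : Type*} [MulAction G Ω] {u : G} (hu : orderOf u = 2)
    (y : Ω) : u • u • y = y := by
  rw [smul_smul, ← sq, ← hu, pow_orderOf_eq_one, one_smul]

lemma orderOf_mul_mul_pow_eq_two {σ τ : G} (hσ : orderOf σ = 2) (hτ : orderOf τ = 2)
    (hστ : (σ * τ) ^ 2 ≠ 1) (m : ℕ) : orderOf (σ * (σ * τ) ^ m) = 2 := by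
  have hσσ : σ * σ = 1 := by rw [← sq, ← hσ, pow_orderOf_eq_one]
  have hinv : σ * (σ * τ) * σ⁻¹ = (σ * τ)⁻¹ := by
    rw [mul_inv_rev, inv_eq_self_of_orderOf_eq_two hτ, ← mul_assoc σ σ, hσσ, one_mul]
  have hinv_pow : σ * (σ * τ) ^ m * σ⁻¹ = ((σ * τ) ^ m)⁻¹ := by
    rw [← conj_pow, hinv, inv_pow]
  refine orderOf_eq_prime_iff.mpr ⟨?_, fun h1 => hστ ?_⟩
  · calc (σ * (σ * τ) ^ m) ^ 2
        _ = σ * (σ * τ) ^ m * σ⁻¹ * (σ * σ) * (σ * τ) ^ m := by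
          rw [sq]; simp only [mul_assoc, inv_mul_cancel_left]
        _ = 1 := by rw [hinv_pow, hσσ, mul_one, inv_mul_cancel]
  · have hcomm : Commute σ (σ * τ) := by
      have hpow := Commute.self_pow (σ * τ) m
      rw [eq_inv_of_mul_eq_one_right h1] at hpow
      exact (Commute.inv_right_iff.mp hpow).symm
    rw [sq, mul_eq_one_iff_eq_inv, ← hinv, hcomm.eq, mul_inv_cancel_right]

end Group

namespace IsSharply2Transitive

variable {G Ω : Type*} [Group G] [MulAction G Ω]

lemma eq_of_smul_eq_of_smul_eq (h : IsSharply2Transitive G Ω) {g₁ g₂ : G} {x y : Ω}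
    (hxy : x ≠ y) (hx : g₁ • x = g₂ • x) (hy : g₁ • y = g₂ • y) : g₁ = g₂ := by
  obtain ⟨g, -, hg⟩ := h x y (g₂ • x) (g₂ • y) hxy ((MulAction.injective g₂).ne hxy)
  exact (hg g₁ ⟨hx, hy⟩).trans (hg g₂ ⟨rfl, rfl⟩).symm

lemma eq_of_smul_eq_self (h : IsSharply2Transitive G Ω) {g : G} (hg : g ≠ 1) {x y : Ω}
    (hx : g • x = x) (hy : g • y = y) : x = y := by
  by_contra hxy
  exact hg (h.eq_of_smul_eq_of_smul_eq hxy (by rwa [one_smul]) (by rwa [one_smul]))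

lemma exists_smul_ne [Nontrivial Ω] (h : IsSharply2Transitive G Ω) {g : G} (hg : g ≠ 1) :
    ∃ x : Ω, g • x ≠ x := by
  by_contra! hfix
  obtain ⟨x, y, hxy⟩ := exists_pair_ne Ω
  exact hxy (h.eq_of_smul_eq_self hg (hfix x) (hfix y))

lemma exists_swap (h : IsSharply2Transitive G Ω) {x y : Ω} (hxy : x ≠ y) :
    ∃ u : G, orderOf u = 2 ∧ u • x = y := by
  obtain ⟨u, ⟨hux, huy⟩, -⟩ := h x y y x hxy hxy.symm
  refine ⟨u, orderOf_eq_prime_iff.mpr ⟨?_, ?_⟩, hux⟩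
  · exact h.eq_of_smul_eq_of_smul_eq hxy (by rw [sq, mul_smul, hux, huy, one_smul])
      (by rw [sq, mul_smul, huy, hux, one_smul])
  · rintro rfl
    exact hxy (one_smul G x ▸ hux)

lemma isConj_of_orderOf_eq_two [Nontrivial Ω] (h : IsSharply2Transitive G Ω) {ρ ζ : G}
    (hρ : orderOf ρ = 2) (hζ : orderOf ζ = 2) : IsConj ρ ζ := by
  obtain ⟨a, ha⟩ := h.exists_smul_ne ((orderOf_eq_prime_iff.mp hρ).2)
  obtain ⟨x, hx⟩ := h.exists_smul_ne ((orderOf_eq_prime_iff.mp hζ).2)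
  obtain ⟨g, ⟨hga, hgρa⟩, -⟩ := h a (ρ • a) x (ζ • x) ha.symm hx.symm
  have hgx : g⁻¹ • x = a := by rw [← hga, inv_smul_smul]
  have hgζx : g⁻¹ • ζ • x = ρ • a := by rw [← hgρa, inv_smul_smul]
  refine isConj_iff.mpr ⟨g, h.eq_of_smul_eq_of_smul_eq hx.symm ?_ ?_⟩
  · rw [mul_smul, mul_smul, hgx, hgρa]
  · rw [mul_smul, mul_smul, hgζx, smul_smul_of_orderOf_eq_two hρ, hga,
      smul_smul_of_orderOf_eq_two hζ]

lemma exists_smul_eq_self_of_orderOf_eq_two [Nontrivial Ω] (h : IsSharply2Transitive G Ω)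
    (hinv : ∃ (ω : Ω) (ρ : G), orderOf ρ = 2 ∧ ρ • ω = ω) {ζ : G} (hζ : orderOf ζ = 2) :
    ∃ w : Ω, ζ • w = w := by
  obtain ⟨ω, ρ, hρ, hρω⟩ := hinv
  obtain ⟨c, rfl⟩ := isConj_iff.mp (h.isConj_of_orderOf_eq_two hρ hζ)
  exact ⟨c • ω, by rw [mul_smul, mul_smul, inv_smul_smul, hρω]⟩

/-- In near-field coordinates with `x = 0`, `q = 1`, `u : z ↦ 1 - z`, `w = 1/2` and `k : z ↦ 2 z`,
this says that `ε • 1 = u • k • 1 = -1`, an expression in which `ε` does not occur. -/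
lemma swap_smul_smul_eq (h : IsSharply2Transitive G Ω) {ε u k : G} {x q w : Ω}
    (hε : orderOf ε = 2) (hεx : ε • x = x) (hu : orderOf u = 2) (hqx : q ≠ x)
    (hux : u • x = q) (huw : u • w = w) (hkx : k • x = x) (hkw : k • w = q) :
    u • ε • q = k • q := by
  have huq : u • q = x := by rw [← hux, smul_smul_of_orderOf_eq_two hu]
  have hpx : u • ε • q ≠ x := by
    intro hp
    have hεq : ε • q = q := MulAction.injective u (hp.trans huq.symm)
    exact hqx (h.eq_of_smul_eq_self (orderOf_eq_prime_iff.mp hε).2 hεq hεx)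
  obtain ⟨c, ⟨hcx, hcq⟩, -⟩ := h x q x (u • ε • q) hqx.symm hpx.symm
  have hcx' : c⁻¹ • x = x := by rw [inv_smul_eq_iff, hcx]
  -- both sides swap `x` and `u • ε • q`
  have hconj : c * u * c⁻¹ = u * ε * u := by
    refine h.eq_of_smul_eq_of_smul_eq hpx.symm ?_ ?_
    · rw [mul_smul, mul_smul, hcx', hux, hcq, mul_smul, mul_smul, hux]
    · rw [mul_smul, mul_smul, inv_smul_eq_iff.mpr hcq.symm, huq, hcx, mul_smul, mul_smul,
        smul_smul_of_orderOf_eq_two hu, smul_smul_of_orderOf_eq_two hε, huq]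
  have hcw : c⁻¹ • q = w := by
    refine h.eq_of_smul_eq_self (orderOf_eq_prime_iff.mp hu).2 ?_ huw
    rw [← smul_left_cancel_iff c, smul_inv_smul, smul_smul, smul_smul, hconj, mul_smul, mul_smul,
      huq, hεx, hux]
  have hwx : w ≠ x := by rintro rfl; exact hqx (hux.symm.trans huw)
  have hck : c = k :=
    h.eq_of_smul_eq_of_smul_eq hwx.symm (hcx.trans hkx.symm)
      (by rw [hkw, ← hcw, smul_inv_smul])
  rw [← hck, hcq]

lemma eq_of_orderOf_eq_two_of_smul_eq_self [Nontrivial Ω] (h : IsSharply2Transitive G Ω)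
    (hinv : ∃ (ω : Ω) (ρ : G), orderOf ρ = 2 ∧ ρ • ω = ω) {ε ε' : G} {x : Ω}
    (hε : orderOf ε = 2) (hε' : orderOf ε' = 2) (hεx : ε • x = x) (hε'x : ε' • x = x) :
    ε = ε' := by
  obtain ⟨q, hqx⟩ := exists_ne x
  obtain ⟨u, hu, hux⟩ := h.exists_swap hqx.symm
  obtain ⟨w, huw⟩ := h.exists_smul_eq_self_of_orderOf_eq_two hinv hu
  have hwx : w ≠ x := by rintro rfl; exact hqx (hux.symm.trans huw)
  obtain ⟨k, ⟨hkx, hkw⟩, -⟩ := h x w x q hwx.symm hqx.symm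
  refine h.eq_of_smul_eq_of_smul_eq hqx.symm (hεx.trans hε'x.symm) ((smul_left_cancel_iff u).mp ?_)
  rw [h.swap_smul_smul_eq hε hεx hu hqx hux huw hkx hkw,
    h.swap_smul_smul_eq hε' hε'x hu hqx hux huw hkx hkw]

lemma conj_eq_of_orderOf_eq_two [Nontrivial Ω] (h : IsSharply2Transitive G Ω)
    (hinv : ∃ (ω : Ω) (ρ : G), orderOf ρ = 2 ∧ ρ • ω = ω) {c c' g : G} {s : Ω}
    (hc : orderOf c = 2) (hc' : orderOf c' = 2) (hcs : c • s = s) (hc's : c' • g • s = g • s) :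
    g * c * g⁻¹ = c' := by
  have hgc : orderOf (g * c * g⁻¹) = 2 := (isConj_iff.mpr ⟨g, rfl⟩).orderOf_eq.symm.trans hc
  refine h.eq_of_orderOf_eq_two_of_smul_eq_self hinv hgc hc' ?_ hc's
  rw [mul_smul, mul_smul, inv_smul_smul, hcs]

lemma isConj_mul_of_orderOf_eq_two [Nontrivial Ω] (h : IsSharply2Transitive G Ω)
    (hinv : ∃ (ω : Ω) (ρ : G), orderOf ρ = 2 ∧ ρ • ω = ω) {a b a' b' : G}
    (ha : orderOf a = 2) (hb : orderOf b = 2) (ha' : orderOf a' = 2) (hb' : orderOf b' = 2)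
    (hab : a ≠ b) (hab' : a' ≠ b') : IsConj (a * b) (a' * b') := by
  obtain ⟨p, hp⟩ := h.exists_smul_eq_self_of_orderOf_eq_two hinv ha
  obtain ⟨r, hr⟩ := h.exists_smul_eq_self_of_orderOf_eq_two hinv hb
  obtain ⟨p', hp'⟩ := h.exists_smul_eq_self_of_orderOf_eq_two hinv ha'
  obtain ⟨r', hr'⟩ := h.exists_smul_eq_self_of_orderOf_eq_two hinv hb'
  have hpr : p ≠ r := by
    rintro rfl; exact hab (h.eq_of_orderOf_eq_two_of_smul_eq_self hinv ha hb hp hr)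
  have hpr' : p' ≠ r' := by
    rintro rfl; exact hab' (h.eq_of_orderOf_eq_two_of_smul_eq_self hinv ha' hb' hp' hr')
  obtain ⟨g, ⟨hgp, hgr⟩, -⟩ := h p r p' r' hpr hpr'
  refine isConj_iff.mpr ⟨g, ?_⟩
  rw [← conj_mul, h.conj_eq_of_orderOf_eq_two hinv ha ha' hp (hgp ▸ hp'),
    h.conj_eq_of_orderOf_eq_two hinv hb hb' hr (hgr ▸ hr')]

end IsSharply2Transitive

theorem orderOf_prod_involutions_prime {G Ω : Type*} [Group G] [MulAction G Ω]
    [Nontrivial Ω] (h : IsSharply2Transitive G Ω)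
    (hinv : ∃ (ω : Ω) (ρ : G), orderOf ρ = 2 ∧ ρ • ω = ω)
    (σ τ : G) (hσ : orderOf σ = 2) (hτ : orderOf τ = 2) (hne : σ ≠ τ)
    (n : ℕ) (hn : orderOf (σ * τ) = n) (hn0 : n ≠ 0) : n.Prime := by
  have hστ : σ * τ ≠ 1 := fun h1 => mul_notMem_of_orderOf_eq_two hσ hτ hne (by simp [h1])
  by_cases hsq : (σ * τ) ^ 2 = 1
  · rw [← hn, orderOf_eq_prime hsq hστ]
    exact Nat.prime_two
  have hn1 : n ≠ 1 := fun h1 => hστ (orderOf_eq_one_iff.mp (hn.trans h1))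
  refine Nat.prime_def.mpr ⟨by omega, fun m hm => or_iff_not_imp_right.mpr fun hmn => ?_⟩
  subst hn
  have hm0 : m ≠ 0 := by rintro rfl; exact hn0 (zero_dvd_iff.mp hm)
  have hpow : (σ * τ) ^ m ≠ 1 :=
    pow_ne_one_of_lt_orderOf hm0 (lt_of_le_of_ne (Nat.le_of_dvd (by omega) hm) hmn)
  have hκ := orderOf_mul_mul_pow_eq_two hσ hτ hsq m
  have hσκ : σ ≠ σ * (σ * τ) ^ m := fun e => hpow (left_eq_mul.mp e)
  have hconj := h.isConj_mul_of_orderOf_eq_two hinv hσ hτ hσ hκ hne hσκ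
  rw [← mul_assoc, ← sq, ← hσ, pow_orderOf_eq_one, one_mul] at hconj
  exact eq_one_of_orderOf_pow_eq hm hn0 hconj.orderOf_eq.symm
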